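/- Let S₁, S₂ be disjoint isolated invariant sets for a dmds F on a locally compact metrizable space with F(S₁) ∩ S₂ = ∅ and F(S₂) ∩ S₁ = ∅. Then there exist disjoint compact isolating neighborhoods N₁ of S₁ and N₂ of S₂ with F(N₁) ∩ N₂ = ∅ and F(N₂) ∩ N₁ = ∅. -/
import Mathlib


open Set Topology

/-- Upper semicontinuity of a multivalued map. -/
def UpperSemicont {X Y : Type*} [TopologicalSpace X] [TopologicalSpace Y]
    (F : X → Set Y) : Prop :=
  ∀ U : Set Y, IsOpen U → IsOpen {x | F x ⊆ U}

/-- The image `F(A) = ⋃ x ∈ A, F x`. -/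
def ImageSet {X Y : Type*} (F : X → Set Y) (A : Set X) : Set Y :=
  ⋃ x ∈ A, F x

/-- The invariant part of `N`: points through which there is a full solution in `N`. -/
def InvPart {X : Type*} (F : X → Set X) (N : Set X) : Set X :=
  {x | ∃ σ : ℤ → X, σ 0 = x ∧ (∀ n, σ n ∈ N) ∧ ∀ n, σ (n + 1) ∈ F (σ n)}

/-- The `F`-boundary of a set `A`: `bd_F(A) = cl A ∩ cl (F(A) \ A)`. -/
def FBoundary {X : Type*} [TopologicalSpace X] (F : X → Set X) (A : Set X) : Set X :=
  closure A ∩ closure (ImageSet F A \ A)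

/-- `(P₁, P₂)` is a weak index pair in `N` for `F`. -/
def IsWeakIndexPair {X : Type*} [TopologicalSpace X] (F : X → Set X)
    (N P₁ P₂ : Set X) : Prop :=
  IsCompact P₁ ∧ IsCompact P₂ ∧ P₂ ⊆ P₁ ∧ P₁ ⊆ N ∧
  ImageSet F P₁ ∩ N ⊆ P₁ ∧ ImageSet F P₂ ∩ N ⊆ P₂ ∧
  FBoundary F P₁ ⊆ P₂ ∧
  InvPart F N ⊆ interior (P₁ \ P₂) ∧
  P₁ \ P₂ ⊆ interior N

/-- `N` is an isolating neighborhood of the invariant set `S`. -/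
def IsIsolatingNbhdOf {X : Type*} [TopologicalSpace X] (F : X → Set X)
    (N S : Set X) : Prop :=
  IsCompact N ∧ InvPart F N = S ∧ S ⊆ interior N

/-- `S` is an isolated invariant set for `F`. -/
def IsIsolatedInvariantSet {X : Type*} [TopologicalSpace X] (F : X → Set X)
    (S : Set X) : Prop :=
  ∃ N, IsIsolatingNbhdOf F N S

section Aux

variable {X : Type*} [TopologicalSpace X]

/-- The graph of a usc compact-valued map into a T2 space is closed. -/
lemma closed_graph_of_usc [T2Space X] {F : X → Set X} (hF : UpperSemicont F)
    (hFc : ∀ x, IsCompact (F x)) : IsClosed {p : X × X | p.2 ∈ F p.1} := by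
  rw [← isOpen_compl_iff]
  rw [isOpen_iff_mem_nhds]
  rintro ⟨x, y⟩ (hxy : y ∉ F x)
  obtain ⟨U, V, hU, hV, hFU, hyV, hUV⟩ :=
    SeparatedNhds.of_isCompact_isCompact (hFc x) isCompact_singleton
      (disjoint_singleton_right.2 hxy)
  have : {z : X | F z ⊆ U} ×ˢ V ∈ nhds (x, y) := by
    apply prod_mem_nhds
    · exact (hF U hU).mem_nhds hFU
    · exact hV.mem_nhds (hyV rfl)
  refine Filter.mem_of_superset this ?_
  rintro ⟨a, b⟩ ⟨ha, hb⟩ (hab : b ∈ F a)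
  exact hUV.ne_of_mem (ha hab) hb rfl

/-- The invariant part of a compact set is compact (usc, compact values, T2). -/
lemma isCompact_invPart [T2Space X] {F : X → Set X} (hF : UpperSemicont F)
    (hFc : ∀ x, IsCompact (F x)) {N : Set X} (hN : IsCompact N) :
    IsCompact (InvPart F N) := by
  have hNc : IsClosed N := hN.isClosed
  set SS : Set (ℤ → X) := {σ | (∀ n, σ n ∈ N) ∧ ∀ n, σ (n + 1) ∈ F (σ n)} with hSS
  have hsub : SS ⊆ Set.pi Set.univ (fun _ : ℤ => N) := by
    intro σ hσ n _
    exact hσ.1 n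
  have hclosed : IsClosed SS := by
    have h1 : IsClosed {σ : ℤ → X | ∀ n, σ n ∈ N} := by
      have : {σ : ℤ → X | ∀ n, σ n ∈ N} = ⋂ n : ℤ, (fun σ : ℤ → X => σ n) ⁻¹' N := by
        ext σ; simp
      rw [this]
      exact isClosed_iInter fun n => hNc.preimage (continuous_apply n)
    have h2 : IsClosed {σ : ℤ → X | ∀ n, σ (n + 1) ∈ F (σ n)} := by
      have : {σ : ℤ → X | ∀ n, σ (n + 1) ∈ F (σ n)} =
          ⋂ n : ℤ, (fun σ : ℤ → X => ((σ n, σ (n + 1)) : X × X)) ⁻¹' {p : X × X | p.2 ∈ F p.1} := by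
        ext σ; simp
      rw [this]
      exact isClosed_iInter fun n =>
        (closed_graph_of_usc hF hFc).preimage ((continuous_apply n).prodMk (continuous_apply (n+1)))
    exact h1.inter h2
  have hSSc : IsCompact SS :=
    (isCompact_univ_pi fun _ : ℤ => hN).of_isClosed_subset hclosed hsub
  have himg : InvPart F N = (fun σ : ℤ → X => σ 0) '' SS := by
    ext x
    constructor
    · rintro ⟨σ, h0, hmem, hstep⟩
      exact ⟨σ, ⟨hmem, hstep⟩, h0⟩
    · rintro ⟨σ, ⟨hmem, hstep⟩, h0⟩
      exact ⟨σ, h0, hmem, hstep⟩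
  rw [himg]
  exact hSSc.image (continuous_apply 0)

/-- The image of a compact set under a usc compact-valued map is compact. -/
lemma isCompact_imageSet {F : X → Set X} (hF : UpperSemicont F)
    (hFc : ∀ x, IsCompact (F x)) {s : Set X} (hs : IsCompact s) :
    IsCompact (ImageSet F s) := by
  classical
  apply isCompact_of_finite_subcover
  intro ι U hU hcov
  have hx : ∀ x : X, x ∈ s → ∃ t : Finset ι, F x ⊆ ⋃ i ∈ t, U i := by
    intro x hxs
    apply (hFc x).elim_finite_subcover U hU
    intro y hy
    exact hcov (Set.mem_biUnion hxs hy)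
  choose! t ht using hx
  have hcov' : s ⊆ ⋃ x ∈ s, {y | F y ⊆ ⋃ i ∈ t x, U i} := by
    intro x hxs
    exact Set.mem_biUnion hxs (ht x hxs)
  obtain ⟨T, hT⟩ := hs.elim_finite_subcover_image
    (fun x _ => hF _ (isOpen_biUnion fun i _ => hU i)) hcov'
  obtain ⟨hTsub, hTfin, hTcov⟩ := hT
  refine ⟨hTfin.toFinset.biUnion t, ?_⟩
  rintro y ⟨_, ⟨x, rfl⟩, _, ⟨hxs, rfl⟩, hy⟩
  obtain ⟨_, ⟨x₀, rfl⟩, _, ⟨hx₀T, rfl⟩, hx⟩ := hTcov hxs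
  have := hx hy
  simp only [Set.mem_iUnion] at this ⊢
  obtain ⟨i, hi, hyi⟩ := this
  exact ⟨i, Finset.mem_biUnion.2 ⟨x₀, hTfin.mem_toFinset.2 hx₀T, hi⟩, hyi⟩

/-- Monotonicity of the invariant part. -/
lemma invPart_mono {F : X → Set X} {M N : Set X} (h : M ⊆ N) :
    InvPart F M ⊆ InvPart F N := by
  rintro x ⟨σ, h0, hmem, hstep⟩
  exact ⟨σ, h0, fun n => h (hmem n), hstep⟩

/-- The invariant part of `M` lies in the invariant part of any superset of itself. -/
lemma invPart_subset_invPart_of_subset {F : X → Set X} {M N : Set X}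
    (h : InvPart F M ⊆ N) : InvPart F M ⊆ InvPart F N := by
  rintro x ⟨σ, h0, hmem, hstep⟩
  refine ⟨σ, h0, fun n => h ⟨fun m => σ (m + n), by simp, fun m => hmem (m + n), fun m => ?_⟩, hstep⟩
  have := hstep (m + n)
  rwa [add_right_comm] at this

end Aux

/-- disjoint isolated invariant sets whose images do not meet the other
set admit disjoint isolating neighborhoods whose images do not meet the other
neighborhood. -/
theorem separated_isolating_nbhds {X : Type*} [TopologicalSpace X] [TopologicalSpace.MetrizableSpace X]
    [LocallyCompactSpace X] (F : X → Set X)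
    (hF : UpperSemicont F) (hFc : ∀ x, IsCompact (F x))
    (S₁ S₂ : Set X)
    (hS₁ : IsIsolatedInvariantSet F S₁) (hS₂ : IsIsolatedInvariantSet F S₂)
    (hdisj : Disjoint S₁ S₂)
    (hsep₁ : ImageSet F S₁ ∩ S₂ = ∅) (hsep₂ : ImageSet F S₂ ∩ S₁ = ∅) :
    ∃ N₁ N₂ : Set X,
      IsIsolatingNbhdOf F N₁ S₁ ∧ IsIsolatingNbhdOf F N₂ S₂ ∧
      Disjoint N₁ N₂ ∧
      ImageSet F N₁ ∩ N₂ = ∅ ∧ ImageSet F N₂ ∩ N₁ = ∅ := by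
  obtain ⟨M₁, hM₁c, hM₁inv, hM₁int⟩ := hS₁
  obtain ⟨M₂, hM₂c, hM₂inv, hM₂int⟩ := hS₂
  have hS₁cpt : IsCompact S₁ := hM₁inv ▸ isCompact_invPart hF hFc hM₁c
  have hS₂cpt : IsCompact S₂ := hM₂inv ▸ isCompact_invPart hF hFc hM₂c
  have hFS₁ : IsCompact (ImageSet F S₁) := isCompact_imageSet hF hFc hS₁cpt
  have hFS₂ : IsCompact (ImageSet F S₂) := isCompact_imageSet hF hFc hS₂cpt
  -- Step 1: a compact neighborhood K₁ of S₁ inside M₁, avoiding S₂ ∪ F(S₂).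
  have hopen1 : IsOpen (interior M₁ ∩ (S₂ ∪ ImageSet F S₂)ᶜ) :=
    isOpen_interior.inter (hS₂cpt.union hFS₂).isClosed.isOpen_compl
  have hS₁sub : S₁ ⊆ interior M₁ ∩ (S₂ ∪ ImageSet F S₂)ᶜ := by
    intro x hx
    refine ⟨hM₁int hx, ?_⟩
    rintro (h | h)
    · exact Set.disjoint_left.1 hdisj hx h
    · have : x ∈ ImageSet F S₂ ∩ S₁ := ⟨h, hx⟩
      rw [hsep₂] at this
      exact this
  obtain ⟨K₁, hK₁c, hK₁int, hK₁sub⟩ := exists_compact_between hS₁cpt hopen1 hS₁sub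
  -- Step 2: a compact neighborhood K₂ of S₂ inside M₂, avoiding K₁ ∪ F(S₁).
  have hopen2 : IsOpen (interior M₂ ∩ (K₁ ∪ ImageSet F S₁)ᶜ) :=
    isOpen_interior.inter (hK₁c.union hFS₁).isClosed.isOpen_compl
  have hS₂sub : S₂ ⊆ interior M₂ ∩ (K₁ ∪ ImageSet F S₁)ᶜ := by
    intro x hx
    refine ⟨hM₂int hx, ?_⟩
    rintro (h | h)
    · exact (hK₁sub h).2 (Or.inl hx)
    · have : x ∈ ImageSet F S₁ ∩ S₂ := ⟨h, hx⟩
      rw [hsep₁] at this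
      exact this
  obtain ⟨K₂, hK₂c, hK₂int, hK₂sub⟩ := exists_compact_between hS₂cpt hopen2 hS₂sub
  -- Step 3: N₁, a compact neighborhood of S₁ inside int K₁ with F(N₁) ∩ K₂ = ∅.
  have hopen3 : IsOpen (interior K₁ ∩ {x | F x ⊆ K₂ᶜ}) :=
    isOpen_interior.inter (hF _ hK₂c.isClosed.isOpen_compl)
  have hS₁sub3 : S₁ ⊆ interior K₁ ∩ {x | F x ⊆ K₂ᶜ} := by
    intro x hx
    refine ⟨hK₁int hx, fun y hy hyK₂ => ?_⟩
    exact (hK₂sub hyK₂).2 (Or.inr (Set.mem_biUnion hx hy))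
  obtain ⟨N₁, hN₁c, hN₁int, hN₁sub⟩ := exists_compact_between hS₁cpt hopen3 hS₁sub3
  -- Step 4: N₂, a compact neighborhood of S₂ inside int K₂ with F(N₂) ∩ N₁ = ∅.
  have hopen4 : IsOpen (interior K₂ ∩ {x | F x ⊆ N₁ᶜ}) :=
    isOpen_interior.inter (hF _ hN₁c.isClosed.isOpen_compl)
  have hS₂sub4 : S₂ ⊆ interior K₂ ∩ {x | F x ⊆ N₁ᶜ} := by
    intro x hx
    refine ⟨hK₂int hx, fun y hy hyN₁ => ?_⟩
    have : y ∈ K₁ := interior_subset (hN₁sub hyN₁).1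
    exact (hK₁sub this).2 (Or.inr (Set.mem_biUnion hx hy))
  obtain ⟨N₂, hN₂c, hN₂int, hN₂sub⟩ := exists_compact_between hS₂cpt hopen4 hS₂sub4
  -- Basic inclusions
  have hN₁K₁ : N₁ ⊆ K₁ := fun x hx => interior_subset (hN₁sub hx).1
  have hN₂K₂ : N₂ ⊆ K₂ := fun x hx => interior_subset (hN₂sub hx).1
  have hN₁M₁ : N₁ ⊆ M₁ := fun x hx => interior_subset (hK₁sub (hN₁K₁ hx)).1
  have hN₂M₂ : N₂ ⊆ M₂ := fun x hx => interior_subset (hK₂sub (hN₂K₂ hx)).1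
  refine ⟨N₁, N₂, ⟨hN₁c, ?_, hN₁int⟩, ⟨hN₂c, ?_, hN₂int⟩, ?_, ?_, ?_⟩
  · -- InvPart F N₁ = S₁
    apply Set.Subset.antisymm
    · exact hM₁inv ▸ invPart_mono hN₁M₁
    · have : InvPart F M₁ ⊆ N₁ := by
        rw [hM₁inv]; exact fun x hx => interior_subset (hN₁int hx)
      rw [← hM₁inv]
      exact invPart_subset_invPart_of_subset this
  · -- InvPart F N₂ = S₂
    apply Set.Subset.antisymm
    · exact hM₂inv ▸ invPart_mono hN₂M₂
    · have : InvPart F M₂ ⊆ N₂ := by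
        rw [hM₂inv]; exact fun x hx => interior_subset (hN₂int hx)
      rw [← hM₂inv]
      exact invPart_subset_invPart_of_subset this
  · -- Disjoint N₁ N₂
    rw [Set.disjoint_left]
    intro x hx₁ hx₂
    exact (hK₂sub (hN₂K₂ hx₂)).2 (Or.inl (hN₁K₁ hx₁))
  · -- ImageSet F N₁ ∩ N₂ = ∅
    rw [Set.eq_empty_iff_forall_notMem]
    rintro y ⟨hy, hyN₂⟩
    simp only [ImageSet, Set.mem_iUnion] at hy
    obtain ⟨x, hx, hyx⟩ := hy
    exact (hN₁sub hx).2 hyx (hN₂K₂ hyN₂)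
  · -- ImageSet F N₂ ∩ N₁ = ∅
    rw [Set.eq_empty_iff_forall_notMem]
    rintro y ⟨hy, hyN₁⟩
    simp only [ImageSet, Set.mem_iUnion] at hy
    obtain ⟨x, hx, hyx⟩ := hy
    exact (hN₂sub hx).2 hyx hyN₁
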